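/- arXiv:1309.7625 — 3 statements merged into one kernel-verified Lean document; each statement's English description precedes it below -/
import Mathlib

section
/- If ũ is harmonic on the open unit ball of ℝ^N and continuous on its closure, and h > 0, then u(x) = ∫₀¹ ε^{h-1} ũ(εx) dε defines a function harmonic on the open unit ball. -/
open MeasureTheory Metric
open scoped RealInnerProductSpace

noncomputable def lap {N : ℕ} (f : EuclideanSpace ℝ (Fin N) → ℝ)
    (x : EuclideanSpace ℝ (Fin N)) : ℝ :=
  ∑ i, fderiv ℝ (fun y => fderiv ℝ f y (EuclideanSpace.single i 1)) x
      (EuclideanSpace.single i 1)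

def IsHarmonicOn {N : ℕ} (f : EuclideanSpace ℝ (Fin N) → ℝ)
    (U : Set (EuclideanSpace ℝ (Fin N))) : Prop :=
  ContDiffOn ℝ 2 f U ∧ ∀ x ∈ U, lap f x = 0

/-!
Differentiating under the integral sign, the derivative of `x ↦ ∫₀¹ w(ε) f(εx) dε` is
`x ↦ ∫₀¹ ε w(ε) Df(εx) dε`, an average of the same kind with the integrable weight `ε w(ε)`.
On a ball `‖x‖ ≤ s < 1` every point `εx` stays in the compact ball `closedBall 0 s`, where `f`
and its derivatives are bounded, so the integrands are dominated by a multiple of `|w|`.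
Hence such an average of a `C²` function is `C²`, and its Laplacian at `x` is
`∫₀¹ ε² w(ε) Δf(εx) dε`, which vanishes when `f` is harmonic.
-/

open Set Filter Topology

lemma MeasureTheory.IntegrableOn.mul_id_Ioo {w : ℝ → ℝ}
    (hw : IntegrableOn w (Ioo (0 : ℝ) 1)) :
    IntegrableOn (fun ε => w ε * ε) (Ioo (0 : ℝ) 1) := by
  refine hw.mul_bdd (c := 1) aestronglyMeasurable_id ?_
  refine (ae_restrict_iff' measurableSet_Ioo).2 (ae_of_all _ fun ε hε => ?_)
  rw [Real.norm_eq_abs, abs_of_pos hε.1]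
  exact hε.2.le

section

variable {E G : Type*} [NormedAddCommGroup E] [NormedSpace ℝ E]
  [NormedAddCommGroup G] [NormedSpace ℝ G] {f : E → G} {x : E} {ε r : ℝ}

lemma smul_mem_ball_zero_of_mem_Ioo (hε : ε ∈ Ioo (0 : ℝ) 1) (hx : x ∈ ball 0 r) :
    ε • x ∈ ball 0 r :=
  (convex_ball 0 r).smul_mem_of_zero_mem (mem_ball_self (pos_of_mem_ball hx)) hx
    (Ioo_subset_Icc_self hε)

lemma smul_mem_closedBall_zero_of_mem_Ioo (hε : ε ∈ Ioo (0 : ℝ) 1) (hx : x ∈ closedBall 0 r) :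
    ε • x ∈ closedBall 0 r :=
  (convex_closedBall 0 r).smul_mem_of_zero_mem (mem_closedBall_self (dist_nonneg.trans hx)) hx
    (Ioo_subset_Icc_self hε)

lemma HasFDerivAt.comp_const_smul {f' : E →L[ℝ] G} (c : ℝ) (hf : HasFDerivAt f f' (c • x)) :
    HasFDerivAt (fun y => f (c • y)) (c • f') x := by
  have h := hf.comp x ((hasFDerivAt_id x).const_smul c)
  rwa [ContinuousLinearMap.comp_smul, ContinuousLinearMap.comp_id] at h

end

section RadialAverage

variable {E G : Type*} [NormedAddCommGroup E] [NormedSpace ℝ E]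
  [NormedAddCommGroup G] [NormedSpace ℝ G] {w : ℝ → ℝ} {f : E → G} {x : E}

noncomputable def radialAverage (w : ℝ → ℝ) (f : E → G) (x : E) : G :=
  ∫ ε in Ioo (0 : ℝ) 1, w ε • f (ε • x)

lemma aestronglyMeasurable_smul_comp_smul (hw : IntegrableOn w (Ioo (0 : ℝ) 1))
    (hf : ContinuousOn f (ball 0 1)) (hx : x ∈ ball 0 1) :
    AEStronglyMeasurable (fun ε => w ε • f (ε • x)) (volume.restrict (Ioo (0 : ℝ) 1)) := by
  refine hw.aestronglyMeasurable.smul (ContinuousOn.aestronglyMeasurable ?_ measurableSet_Ioo)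
  exact hf.comp (continuous_id.smul continuous_const).continuousOn fun ε hε =>
    smul_mem_ball_zero_of_mem_Ioo hε hx

variable [ProperSpace E]

lemma exists_norm_smul_comp_smul_le (hf : ContinuousOn f (ball 0 1)) {s : ℝ} (hs : s < 1) :
    ∃ C, ∀ ε ∈ Ioo (0 : ℝ) 1, ∀ y ∈ closedBall (0 : E) s, ‖w ε • f (ε • y)‖ ≤ ‖w ε‖ * C := by
  obtain ⟨C, hC⟩ := (isCompact_closedBall (0 : E) s).exists_bound_of_continuousOn
    (hf.mono (closedBall_subset_ball hs))
  refine ⟨C, fun ε hε y hy => ?_⟩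
  rw [norm_smul]
  exact mul_le_mul_of_nonneg_left (hC _ (smul_mem_closedBall_zero_of_mem_Ioo hε hy))
    (norm_nonneg _)

lemma integrableOn_smul_comp_smul (hw : IntegrableOn w (Ioo (0 : ℝ) 1))
    (hf : ContinuousOn f (ball 0 1)) (hx : x ∈ ball 0 1) :
    IntegrableOn (fun ε => w ε • f (ε • x)) (Ioo (0 : ℝ) 1) := by
  obtain ⟨C, hC⟩ := exists_norm_smul_comp_smul_le (w := w) hf (mem_ball_zero_iff.1 hx)
  refine (hw.norm.mul_const C).mono' (aestronglyMeasurable_smul_comp_smul hw hf hx) ?_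
  exact (ae_restrict_iff' measurableSet_Ioo).2 (ae_of_all _ fun ε hε =>
    hC ε hε x (mem_closedBall_zero_iff.2 le_rfl))

lemma hasFDerivAt_radialAverage (hw : IntegrableOn w (Ioo (0 : ℝ) 1))
    (hf : ContDiffOn ℝ 1 f (ball 0 1)) (hx : x ∈ ball 0 1) :
    HasFDerivAt (radialAverage w f) (radialAverage (fun ε => w ε * ε) (fderiv ℝ f) x) x := by
  obtain ⟨s, hxs, hs⟩ := exists_between (mem_ball_zero_iff.1 hx)
  have hf' : ContinuousOn (fderiv ℝ f) (ball 0 1) :=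
    hf.continuousOn_fderiv_of_isOpen isOpen_ball le_rfl
  obtain ⟨C, hC⟩ := exists_norm_smul_comp_smul_le (w := fun ε => w ε * ε) hf' hs
  refine hasFDerivAt_integral_of_dominated_of_fderiv_le
    (F' := fun y ε => (w ε * ε) • fderiv ℝ f (ε • y)) (bound := fun ε => ‖w ε * ε‖ * C)
    (isOpen_ball.mem_nhds (mem_ball_zero_iff.2 hxs)) ?_
    (integrableOn_smul_comp_smul hw hf.continuousOn hx)
    (aestronglyMeasurable_smul_comp_smul hw.mul_id_Ioo hf' hx) ?_
    (hw.mul_id_Ioo.norm.mul_const C) ?_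
  · filter_upwards [isOpen_ball.mem_nhds hx] with y hy
    exact aestronglyMeasurable_smul_comp_smul hw hf.continuousOn hy
  · exact (ae_restrict_iff' measurableSet_Ioo).2
      (ae_of_all _ fun ε hε y hy => hC ε hε y (ball_subset_closedBall hy))
  · refine (ae_restrict_iff' measurableSet_Ioo).2 (ae_of_all _ fun ε hε y hy => ?_)
    have hεy : ε • y ∈ ball (0 : E) 1 :=
      smul_mem_ball_zero_of_mem_Ioo hε (ball_subset_ball hs.le hy)
    have hfd : HasFDerivAt f (fderiv ℝ f (ε • y)) (ε • y) :=
      ((hf.differentiableOn one_ne_zero).differentiableAt (isOpen_ball.mem_nhds hεy)).hasFDerivAt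
    have h := (hfd.comp_const_smul ε).const_smul (w ε)
    rwa [smul_smul] at h

lemma continuousOn_radialAverage (hw : IntegrableOn w (Ioo (0 : ℝ) 1))
    (hf : ContinuousOn f (ball 0 1)) : ContinuousOn (radialAverage w f) (ball 0 1) := by
  intro x hx
  obtain ⟨s, hxs, hs⟩ := exists_between (mem_ball_zero_iff.1 hx)
  obtain ⟨C, hC⟩ := exists_norm_smul_comp_smul_le (w := w) hf hs
  refine (continuousAt_of_dominated (bound := fun ε => ‖w ε‖ * C) ?_ ?_
    (hw.norm.mul_const C) ?_).continuousWithinAt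
  · filter_upwards [isOpen_ball.mem_nhds hx] with y hy
    exact aestronglyMeasurable_smul_comp_smul hw hf hy
  · filter_upwards [isOpen_ball.mem_nhds (mem_ball_zero_iff.2 hxs)] with y hy
    exact (ae_restrict_iff' measurableSet_Ioo).2
      (ae_of_all _ fun ε hε => hC ε hε y (ball_subset_closedBall hy))
  · refine (ae_restrict_iff' measurableSet_Ioo).2 (ae_of_all _ fun ε hε => ?_)
    have hεx := smul_mem_ball_zero_of_mem_Ioo hε hx
    exact ((hf.continuousAt (isOpen_ball.mem_nhds hεx)).comp
      (continuous_const_smul ε).continuousAt).const_smul (w ε)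

lemma eqOn_fderiv_radialAverage (hw : IntegrableOn w (Ioo (0 : ℝ) 1))
    (hf : ContDiffOn ℝ 1 f (ball 0 1)) :
    EqOn (fderiv ℝ (radialAverage w f)) (radialAverage (fun ε => w ε * ε) (fderiv ℝ f))
      (ball 0 1) :=
  fun _ hx => (hasFDerivAt_radialAverage hw hf hx).fderiv

end RadialAverage

universe u

-- `E` and `G` share a universe because the induction replaces `G` by `E →L[ℝ] G`.
theorem contDiffOn_radialAverage {E G : Type u} [NormedAddCommGroup E] [NormedSpace ℝ E]
    [ProperSpace E] [NormedAddCommGroup G] [NormedSpace ℝ G] {w : ℝ → ℝ} {f : E → G} {n : ℕ}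
    (hw : IntegrableOn w (Ioo (0 : ℝ) 1))
    (hf : ContDiffOn ℝ n f (ball 0 1)) : ContDiffOn ℝ n (radialAverage w f) (ball 0 1) := by
  induction n generalizing G w with
  | zero => exact contDiffOn_zero.2 (continuousOn_radialAverage hw hf.continuousOn)
  | succ n ih =>
    have hf1 : ContDiffOn ℝ 1 f (ball 0 1) := hf.of_le (by exact_mod_cast n.succ_pos)
    push_cast at hf ⊢
    rw [contDiffOn_succ_iff_fderiv_of_isOpen isOpen_ball] at hf ⊢
    refine ⟨fun y hy =>
      (hasFDerivAt_radialAverage hw hf1 hy).differentiableAt.differentiableWithinAt, by simp, ?_⟩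
    exact (ih hw.mul_id_Ioo hf.2.2).congr (eqOn_fderiv_radialAverage hw hf1)

lemma lap_eq_sum_fderiv_fderiv {N : ℕ} {f : EuclideanSpace ℝ (Fin N) → ℝ}
    {x : EuclideanSpace ℝ (Fin N)} (hf : DifferentiableAt ℝ (fderiv ℝ f) x) :
    lap f x = ∑ i, fderiv ℝ (fderiv ℝ f) x (EuclideanSpace.single i 1)
      (EuclideanSpace.single i 1) := by
  refine Finset.sum_congr rfl fun i _ => ?_
  rw [fderiv_clm_apply hf (differentiableAt_const _)]
  simp

theorem lap_radialAverage {N : ℕ} {w : ℝ → ℝ} {f : EuclideanSpace ℝ (Fin N) → ℝ}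
    {x : EuclideanSpace ℝ (Fin N)} (hw : IntegrableOn w (Ioo (0 : ℝ) 1))
    (hf : ContDiffOn ℝ 2 f (ball 0 1)) (hx : x ∈ ball 0 1) :
    lap (radialAverage w f) x = ∫ ε in Ioo (0 : ℝ) 1, w ε * ε * ε * lap f (ε • x) := by
  have hf1 : ContDiffOn ℝ 1 f (ball 0 1) := hf.of_le (by norm_num)
  have hf' : ContDiffOn ℝ 1 (fderiv ℝ f) (ball 0 1) :=
    hf.fderiv_of_isOpen isOpen_ball (by norm_num)
  have hD2 : HasFDerivAt (fderiv ℝ (radialAverage w f))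
      (radialAverage (fun ε => w ε * ε * ε) (fderiv ℝ (fderiv ℝ f)) x) x :=
    (hasFDerivAt_radialAverage hw.mul_id_Ioo hf' hx).congr_of_eventuallyEq
      ((eqOn_fderiv_radialAverage hw hf1).eventuallyEq_of_mem (isOpen_ball.mem_nhds hx))
  have hint := integrableOn_smul_comp_smul hw.mul_id_Ioo.mul_id_Ioo
    (hf'.continuousOn_fderiv_of_isOpen isOpen_ball le_rfl) hx
  rw [lap_eq_sum_fderiv_fderiv hD2.differentiableAt, hD2.fderiv, radialAverage]
  simp_rw [ContinuousLinearMap.integral_apply hint,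
    ContinuousLinearMap.integral_apply (hint.apply_continuousLinearMap _)]
  rw [← integral_finsetSum _ fun i _ =>
    (hint.apply_continuousLinearMap _).apply_continuousLinearMap _]
  refine setIntegral_congr_fun measurableSet_Ioo fun ε hε => ?_
  have hεx := smul_mem_ball_zero_of_mem_Ioo hε hx
  rw [lap_eq_sum_fderiv_fderiv ((hf'.differentiableOn one_ne_zero).differentiableAt
    (isOpen_ball.mem_nhds hεx)), Finset.mul_sum]
  simp

theorem IsHarmonicOn.radialAverage {N : ℕ} {w : ℝ → ℝ} {f : EuclideanSpace ℝ (Fin N) → ℝ}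
    (hf : IsHarmonicOn f (ball 0 1)) (hw : IntegrableOn w (Ioo (0 : ℝ) 1)) :
    IsHarmonicOn (radialAverage w f) (ball 0 1) := by
  refine ⟨contDiffOn_radialAverage hw hf.1, fun x hx => ?_⟩
  rw [lap_radialAverage hw hf.1 hx]
  refine setIntegral_eq_zero_of_forall_eq_zero fun ε hε => ?_
  rw [hf.2 _ (smul_mem_ball_zero_of_mem_Ioo hε hx), mul_zero]

theorem stmt1_general {N : ℕ} (u : EuclideanSpace ℝ (Fin N) → ℝ)
    (hu : IsHarmonicOn u (ball 0 1))
    (h : ℝ) (hh : 0 < h) :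
    IsHarmonicOn (fun x => ∫ ε in Set.Ioo (0:ℝ) 1, ε ^ (h - 1) * u (ε • x))
      (ball 0 1) :=
  hu.radialAverage ((intervalIntegral.integrableOn_Ioo_rpow_iff one_pos).2 (by linarith))

theorem stmt1 {N : ℕ} (u : EuclideanSpace ℝ (Fin N) → ℝ)
    (hu : IsHarmonicOn u (ball 0 1)) (hc : ContinuousOn u (closedBall 0 1))
    (h : ℝ) (hh : 0 < h) :
    IsHarmonicOn (fun x => ∫ ε in Set.Ioo (0:ℝ) 1, ε ^ (h - 1) * u (ε • x))
      (ball 0 1) :=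
  stmt1_general u hu h hh
end

section
/- In ℝ², if û is harmonic on an open set U not containing 0, then x ↦ û(x/‖x‖²) is harmonic on the inverted set {x ≠ 0 : x/‖x‖² ∈ U}. -/
open MeasureTheory Metric
open scoped RealInnerProductSpace

/-!
Inversion `g x = ‖x‖⁻² • x` is conformal: `Dg x = ‖x‖⁻² • R` with `R` the reflection in `x^⊥`.
Hence the second-order chain rule gives `Δ(u ∘ g) x = ‖x‖⁻⁴ Δu (g x) + Du (g x) (Δg x)`, because the
trace of `D²u (g x)` may be computed in the orthonormal basis `R ∘ b` as well as in `b`. A direct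
computation gives `Δg x = (4 - 2n) ‖x‖⁻⁴ • x` in dimension `n`, which vanishes in the plane.
-/

open EuclideanGeometry InnerProductSpace Laplacian Filter
open scoped Topology

section SecondDerivative

variable {𝕜 : Type*} [NontriviallyNormedField 𝕜]
  {E F G : Type*} [NormedAddCommGroup E] [NormedSpace 𝕜 E] [NormedAddCommGroup F] [NormedSpace 𝕜 F]
  [NormedAddCommGroup G] [NormedSpace 𝕜 G]

theorem fderiv_fderiv_comp_apply {u : F → G} {g : E → F} {x : E}
    (hu : ContDiffAt 𝕜 2 u (g x)) (hg : ContDiffAt 𝕜 2 g x) (v w : E) :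
    fderiv 𝕜 (fderiv 𝕜 (u ∘ g)) x v w =
      fderiv 𝕜 (fderiv 𝕜 u) (g x) (fderiv 𝕜 g x v) (fderiv 𝕜 g x w) +
        fderiv 𝕜 u (g x) (fderiv 𝕜 (fderiv 𝕜 g) x v w) := by
  have hu' : ∀ᶠ y in 𝓝 x, DifferentiableAt 𝕜 u (g y) :=
    hg.continuousAt.eventually ((hu.eventually (by simp)).mono fun _ h ↦
      h.differentiableAt two_ne_zero)
  have hg' : ∀ᶠ y in 𝓝 x, DifferentiableAt 𝕜 g y :=
    (hg.eventually (by simp)).mono fun _ h ↦ h.differentiableAt two_ne_zero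
  have hchain : fderiv 𝕜 (u ∘ g) =ᶠ[𝓝 x] fun y ↦ (fderiv 𝕜 u (g y)).comp (fderiv 𝕜 g y) := by
    filter_upwards [hu', hg'] with y huy hgy using fderiv_comp y huy hgy
  have hDu : HasFDerivAt (fun y ↦ fderiv 𝕜 u (g y))
      ((fderiv 𝕜 (fderiv 𝕜 u) (g x)).comp (fderiv 𝕜 g x)) x :=
    ((hu.fderiv_right one_add_one_eq_two.le).differentiableAt one_ne_zero).hasFDerivAt.comp x
      (hg.differentiableAt two_ne_zero).hasFDerivAt
  have hDg : HasFDerivAt (fderiv 𝕜 g) (fderiv 𝕜 (fderiv 𝕜 g) x) x :=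
    ((hg.fderiv_right one_add_one_eq_two.le).differentiableAt one_ne_zero).hasFDerivAt
  rw [hchain.fderiv_eq, (hDu.clm_comp hDg).fderiv]
  simp [add_comm]

end SecondDerivative

section Laplacian

variable {E E' F : Type*} [NormedAddCommGroup E] [InnerProductSpace ℝ E] [FiniteDimensional ℝ E]
  [NormedAddCommGroup E'] [InnerProductSpace ℝ E'] [FiniteDimensional ℝ E']
  [NormedAddCommGroup F] [NormedSpace ℝ F]

theorem laplacian_eq_sum_fderiv_fderiv {ι : Type*} [Fintype ι] (f : E → F)
    (b : OrthonormalBasis ι ℝ E) (x : E) :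
    Δ f x = ∑ i, fderiv ℝ (fderiv ℝ f) x (b i) (b i) := by
  simp [laplacian_eq_iteratedFDeriv_orthonormalBasis f b, iteratedFDeriv_two_apply]

theorem laplacian_comp_of_fderiv_eq_smul_isometry {u : E' → F} {g : E → E'} {x : E}
    (hu : ContDiffAt ℝ 2 u (g x)) (hg : ContDiffAt ℝ 2 g x) {c : ℝ} (R : E ≃ₗᵢ[ℝ] E')
    (hgR : fderiv ℝ g x = c • (R : E →L[ℝ] E')) :
    Δ (u ∘ g) x = c ^ 2 • Δ u (g x) + fderiv ℝ u (g x) (Δ g x) := by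
  let b := stdOrthonormalBasis ℝ E
  simp only [laplacian_eq_sum_fderiv_fderiv _ b, laplacian_eq_sum_fderiv_fderiv u (b.map R),
    fderiv_fderiv_comp_apply hu hg, hgR, Finset.sum_add_distrib, map_sum, Finset.smul_sum]
  simp [pow_two, smul_smul]

end Laplacian

section Inversion

variable {E : Type*} [NormedAddCommGroup E] [InnerProductSpace ℝ E]

theorem inversion_zero_one_apply (x : E) : inversion (0 : E) 1 x = (‖x‖ ^ 2)⁻¹ • x := by
  simp [inversion]

theorem contDiffAt_inversion_zero_one {n : ℕ∞} {x : E} (hx : x ≠ 0) :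
    ContDiffAt ℝ n (inversion (0 : E) 1) x :=
  contDiffAt_const.inversion contDiffAt_const contDiffAt_id hx

theorem fderiv_inversion_zero_one {x : E} (hx : x ≠ 0) :
    fderiv ℝ (inversion (0 : E) 1) x = (‖x‖ ^ 2)⁻¹ • ((ℝ ∙ x)ᗮ.reflection : E →L[ℝ] E) := by
  simp [(hasFDerivAt_inversion (R := 1) hx).fderiv]

theorem fderiv_inversion_zero_one_apply {x : E} (hx : x ≠ 0) (v : E) :
    fderiv ℝ (inversion (0 : E) 1) x v =
      (‖x‖ ^ 2)⁻¹ • v - (2 * ⟪x, v⟫ * ((‖x‖ ^ 2)⁻¹) ^ 2) • x := by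
  rw [fderiv_inversion_zero_one hx]
  simp only [smul_apply, ContinuousLinearEquiv.coe_coe,
    LinearIsometryEquiv.coe_toContinuousLinearEquiv, Submodule.reflection_orthogonal_apply,
    Submodule.reflection_singleton_apply, Real.ringHom_apply, neg_sub, inv_pow]
  match_scalars <;> ring

theorem fderiv_fderiv_inversion_zero_one_apply_self {x : E} (hx : x ≠ 0) (v : E) :
    fderiv ℝ (fderiv ℝ (inversion (0 : E) 1)) x v v =
      (-4 * ⟪x, v⟫ * ((‖x‖ ^ 2)⁻¹) ^ 2) • v +
        (8 * ⟪x, v⟫ ^ 2 * ((‖x‖ ^ 2)⁻¹) ^ 3 - 2 * ‖v‖ ^ 2 * ((‖x‖ ^ 2)⁻¹) ^ 2) • x := by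
  have hDg : DifferentiableAt ℝ (fderiv ℝ (inversion (0 : E) 1)) x :=
    ((contDiffAt_inversion_zero_one (n := 2) hx).fderiv_right
      one_add_one_eq_two.le).differentiableAt one_ne_zero
  have hloc : (fun z ↦ fderiv ℝ (inversion (0 : E) 1) z v) =ᶠ[𝓝 x]
      fun z ↦ (‖z‖ ^ 2)⁻¹ • v - (2 * ⟪z, v⟫ * ((‖z‖ ^ 2)⁻¹) ^ 2) • z := by
    filter_upwards [isOpen_ne.mem_nhds hx] with z hz using fderiv_inversion_zero_one_apply hz v
  have hφ : HasFDerivAt (fun z : E ↦ (‖z‖ ^ 2)⁻¹) _ x :=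
    (hasDerivAt_inv (by positivity)).comp_hasFDerivAt x (hasFDerivAt_id x).norm_sq
  have hinner : HasFDerivAt (fun z : E ↦ ⟪z, v⟫) _ x :=
    (hasFDerivAt_id x).inner ℝ (hasFDerivAt_const v x)
  have h : HasFDerivAt (fun z ↦ (‖z‖ ^ 2)⁻¹ • v - (2 * ⟪z, v⟫ * ((‖z‖ ^ 2)⁻¹) ^ 2) • z) _ x :=
    (hφ.smul_const v).sub (((hinner.const_mul 2).mul (hφ.pow 2)).smul (hasFDerivAt_id x))
  have happly : fderiv ℝ (fderiv ℝ (inversion (0 : E) 1)) x v v =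
      fderiv ℝ (fun z ↦ fderiv ℝ (inversion (0 : E) 1) z v) x v := by
    simp [fderiv_clm_apply hDg (differentiableAt_const v)]
  rw [happly, hloc.fderiv_eq, h.fderiv]
  simp only [id_eq, ContinuousLinearMap.comp_id, neg_smul, inv_pow, Pi.mul_apply,
    Nat.add_one_sub_one, pow_one, nsmul_eq_mul, Nat.cast_ofNat, smul_neg, sub_apply, neg_apply,
    smul_apply, add_apply, zero_apply, ContinuousLinearMap.smulRight_apply, coe_innerSL_apply,
    smul_eq_mul, ContinuousLinearMap.id_apply, ContinuousLinearMap.comp_apply,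
    ContinuousLinearMap.prod_apply, fderivInnerCLM_apply, inner_zero_right,
    inner_self_eq_norm_sq_to_K, Real.ringHom_apply, zero_add, neg_mul]
  match_scalars <;> ring

variable [FiniteDimensional ℝ E]

theorem laplacian_inversion_zero_one {x : E} (hx : x ≠ 0) :
    Δ (inversion (0 : E) 1) x = ((4 - 2 * Module.finrank ℝ E) * ((‖x‖ ^ 2)⁻¹) ^ 2) • x := by
  let b := stdOrthonormalBasis ℝ E
  set φ := (‖x‖ ^ 2)⁻¹ with hφ
  have hradial : ∑ i, (-4 * ⟪x, b i⟫ * φ ^ 2) • b i = (-4 * φ ^ 2) • x := by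
    conv_rhs => rw [← b.sum_repr' x, Finset.smul_sum]
    refine Finset.sum_congr rfl fun i _ ↦ ?_
    rw [smul_smul, real_inner_comm]
    ring_nf
  have htrace : ∑ i, (8 * ⟪x, b i⟫ ^ 2 * φ ^ 3 - 2 * ‖b i‖ ^ 2 * φ ^ 2) =
      8 * ‖x‖ ^ 2 * φ ^ 3 - 2 * Module.finrank ℝ E * φ ^ 2 := by
    simp only [b.norm_eq_one, one_pow, mul_one, Finset.sum_sub_distrib, ← Finset.sum_mul,
      ← Finset.mul_sum, b.sum_sq_inner_left, Finset.sum_const, Finset.card_univ, Fintype.card_fin,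
      nsmul_eq_mul]
    ring
  rw [laplacian_eq_sum_fderiv_fderiv _ b]
  simp_rw [fderiv_fderiv_inversion_zero_one_apply_self hx, ← hφ, Finset.sum_add_distrib, hradial]
  rw [← Finset.sum_smul, htrace, ← add_smul]
  have hφx : φ * ‖x‖ ^ 2 = 1 := inv_mul_cancel₀ (by positivity)
  congr 1
  linear_combination 8 * φ ^ 2 * hφx

variable {F : Type*} [NormedAddCommGroup F] [NormedSpace ℝ F]

theorem laplacian_comp_inversion_zero_one {u : E → F} {x : E} (hx : x ≠ 0)
    (hu : ContDiffAt ℝ 2 u (inversion 0 1 x)) :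
    Δ (u ∘ inversion (0 : E) 1) x = ((‖x‖ ^ 2)⁻¹) ^ 2 • (Δ u (inversion 0 1 x) +
      (4 - 2 * Module.finrank ℝ E : ℝ) • fderiv ℝ u (inversion 0 1 x) x) := by
  rw [laplacian_comp_of_fderiv_eq_smul_isometry hu (contDiffAt_inversion_zero_one hx) _
    (fderiv_inversion_zero_one hx), laplacian_inversion_zero_one hx, map_smul, smul_add, smul_smul]
  ring_nf

theorem laplacian_comp_inversion_zero_one_of_finrank_eq_two (hE : Module.finrank ℝ E = 2)
    {u : E → F} {x : E} (hx : x ≠ 0) (hu : ContDiffAt ℝ 2 u (inversion 0 1 x)) :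
    Δ (u ∘ inversion (0 : E) 1) x = ((‖x‖ ^ 2)⁻¹) ^ 2 • Δ u (inversion 0 1 x) := by
  rw [laplacian_comp_inversion_zero_one hx hu, hE]
  norm_num

end Inversion

theorem lap_eq_laplacian {N : ℕ} {f : EuclideanSpace ℝ (Fin N) → ℝ} {x : EuclideanSpace ℝ (Fin N)}
    (hf : ContDiffAt ℝ 2 f x) : lap f x = Δ f x := by
  have hDf : DifferentiableAt ℝ (fderiv ℝ f) x :=
    (hf.fderiv_right one_add_one_eq_two.le).differentiableAt one_ne_zero
  rw [laplacian_eq_sum_fderiv_fderiv f (EuclideanSpace.basisFun (Fin N) ℝ), lap]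
  refine Finset.sum_congr rfl fun i _ ↦ ?_
  simp [fderiv_clm_apply hDf (differentiableAt_const _)]

theorem stmt11_general (U : Set (EuclideanSpace ℝ (Fin 2))) (hU : IsOpen U)
    (u : EuclideanSpace ℝ (Fin 2) → ℝ) (hu : IsHarmonicOn u U) :
    IsHarmonicOn (fun x => u ((‖x‖ ^ 2)⁻¹ • x))
      {x | x ≠ 0 ∧ (‖x‖ ^ 2)⁻¹ • x ∈ U} := by
  have hcomp : (fun x => u ((‖x‖ ^ 2)⁻¹ • x)) = u ∘ inversion 0 1 := by
    funext x
    simp [inversion_zero_one_apply]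
  simp_rw [hcomp, ← inversion_zero_one_apply]
  have hu₂ : ∀ y ∈ U, ContDiffAt ℝ 2 u y := fun y hy ↦ hu.1.contDiffAt (hU.mem_nhds hy)
  have hsmooth : ∀ x ∈ {x | x ≠ 0 ∧ inversion 0 1 x ∈ U}, ContDiffAt ℝ 2 (u ∘ inversion 0 1) x :=
    fun x hx ↦ (hu₂ _ hx.2).comp x (contDiffAt_inversion_zero_one hx.1)
  refine ⟨fun x hx ↦ (hsmooth x hx).contDiffWithinAt, fun x hx ↦ ?_⟩
  rw [lap_eq_laplacian (hsmooth x hx), laplacian_comp_inversion_zero_one_of_finrank_eq_two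
    finrank_euclideanSpace_fin hx.1 (hu₂ _ hx.2), ← lap_eq_laplacian (hu₂ _ hx.2), hu.2 _ hx.2,
    smul_zero]

theorem stmt11 (U : Set (EuclideanSpace ℝ (Fin 2))) (hU : IsOpen U) (h0 : (0 : EuclideanSpace ℝ (Fin 2)) ∉ U)
    (u : EuclideanSpace ℝ (Fin 2) → ℝ) (hu : IsHarmonicOn u U) :
    IsHarmonicOn (fun x => u ((‖x‖ ^ 2)⁻¹ • x))
      {x | x ≠ 0 ∧ (‖x‖ ^ 2)⁻¹ • x ∈ U} :=
  stmt11_general U hU u hu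
end

section
/- Let K > 0 be a real number (scalar case m = 1), 0 < r < 1, and û harmonic and bounded on the open unit disc in ℝ². Define u on the disc by u(x) = Σ_{j≥0} q^j ( û(x r^{2j}) − q û((x/‖x‖²) r^{2j+2}) ) for r < ‖x‖ < 1 and u(x) = (2K/(1+K)) Σ_{j≥0} q^j û(x r^{2j}) for ‖x‖ < r, where q = (1-K)/(1+K). Then the boundary values from outside and inside the circle ‖x‖ = r agree: u⁻(η) = u⁺(η) for ‖η‖ = r, where u⁻ and u⁺ denote radial limits from ‖x‖ > r and ‖x‖ < r respectively. -/
/-! On the circle `‖x‖ = r` the reflection `x ↦ r² x / ‖x‖²` is the identity, so there the `j`-th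
term of the outer series is `(1 - q)` times the `j`-th term of the inner one. Since `u` is bounded
and `|q| < 1`, both series are dominated by a geometric series, hence (Weierstrass M-test) are
continuous on the annulus `r² < ‖x‖ < 1` and on the unit disc respectively, both neighbourhoods of
the circle. The two radial limits are therefore the values at `η`, which agree because
`1 - q = 2K / (1 + K)`. -/

open MeasureTheory Metric
open scoped RealInnerProductSpace

open Filter Topology Set

lemma abs_one_sub_div_one_add_lt_one {K : ℝ} (hK : 0 < K) : |(1 - K) / (1 + K)| < 1 := by
  rw [abs_div, abs_of_pos (by linarith : 0 < 1 + K), div_lt_one (by linarith), abs_lt]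
  constructor <;> linarith

lemma one_sub_one_sub_div_one_add {K : ℝ} (hK : 1 + K ≠ 0) :
    1 - (1 - K) / (1 + K) = 2 * K / (1 + K) := by
  field_simp
  ring

lemma continuousOn_tsum_geometric_mul {β 𝕜 : Type*} [TopologicalSpace β] [NormedField 𝕜]
    [CompleteSpace 𝕜] {q : 𝕜} (hq : ‖q‖ < 1) {C : ℝ} {f : ℕ → β → 𝕜} {s : Set β}
    (hf : ∀ j, ContinuousOn (f j) s) (hb : ∀ j, ∀ x ∈ s, ‖f j x‖ ≤ C) :
    ContinuousOn (fun x => ∑' j, q ^ j * f j x) s := by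
  refine continuousOn_tsum (fun j => continuousOn_const.mul (hf j))
    ((summable_geometric_of_lt_one (norm_nonneg q) hq).mul_right C) fun j x hx => ?_
  rw [norm_mul, norm_pow]
  exact mul_le_mul_of_nonneg_left (hb j x hx) (by positivity)

section
variable {E : Type*} [NormedAddCommGroup E] [NormedSpace ℝ E]

/-- With `q = (1 - K) / (1 + K)`, the paper's `u` is `outerSeries u q r` on `r < ‖x‖ < 1` and
`(1 - q) * innerSeries u q r` on `‖x‖ < r`. -/
noncomputable def outerSeries (u : E → ℝ) (q r : ℝ) (x : E) : ℝ :=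
  ∑' j : ℕ, q ^ j * (u (r ^ (2 * j) • x) - q * u (r ^ (2 * j + 2) • ((‖x‖ ^ 2)⁻¹ • x)))

noncomputable def innerSeries (u : E → ℝ) (q r : ℝ) (x : E) : ℝ :=
  ∑' j : ℕ, q ^ j * u (r ^ (2 * j) • x)

lemma norm_inv_norm_sq_smul (x : E) : ‖(‖x‖ ^ 2)⁻¹ • x‖ = ‖x‖⁻¹ := by
  rcases eq_or_ne ‖x‖ 0 with hx | hx
  · simp [hx]
  · rw [norm_smul, norm_inv, norm_pow, norm_norm]
    field_simp

lemma pow_smul_mem_ball {r : ℝ} (hr0 : 0 ≤ r) (hr1 : r ≤ 1) (n : ℕ) {x : E}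
    (hx : x ∈ ball (0 : E) 1) : r ^ n • x ∈ ball (0 : E) 1 := by
  rw [mem_ball_zero_iff] at hx ⊢
  rw [norm_smul, Real.norm_of_nonneg (by positivity)]
  calc r ^ n * ‖x‖ ≤ 1 * ‖x‖ := by gcongr; exact pow_le_one₀ hr0 hr1
    _ < 1 := by simpa using hx

lemma pow_add_two_smul_inv_norm_sq_smul_mem_ball {r : ℝ} (hr0 : 0 ≤ r) (hr1 : r ≤ 1) (n : ℕ)
    {x : E} (hx : r ^ 2 < ‖x‖) : r ^ (n + 2) • ((‖x‖ ^ 2)⁻¹ • x) ∈ ball (0 : E) 1 := by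
  have hx0 : 0 < ‖x‖ := (sq_nonneg r).trans_lt hx
  rw [mem_ball_zero_iff, norm_smul, norm_inv_norm_sq_smul, Real.norm_of_nonneg (by positivity),
    ← div_eq_mul_inv, div_lt_one hx0, pow_add]
  calc r ^ n * r ^ 2 ≤ 1 * r ^ 2 := by gcongr; exact pow_le_one₀ hr0 hr1
    _ < ‖x‖ := by simpa using hx

lemma pow_add_two_smul_inv_norm_sq_smul_of_norm_eq {r : ℝ} (hr : r ≠ 0) (n : ℕ) {x : E}
    (hx : ‖x‖ = r) : r ^ (n + 2) • ((‖x‖ ^ 2)⁻¹ • x) = r ^ n • x := by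
  rw [smul_smul, hx, pow_add, mul_assoc, mul_inv_cancel₀ (pow_ne_zero 2 hr), mul_one]

variable {u : E → ℝ} {q r C : ℝ}

lemma outerSeries_of_norm_eq (hr : r ≠ 0) {x : E} (hx : ‖x‖ = r) :
    outerSeries u q r x = (1 - q) * innerSeries u q r x := by
  rw [outerSeries, innerSeries, ← tsum_mul_left]
  refine tsum_congr fun j => ?_
  rw [pow_add_two_smul_inv_norm_sq_smul_of_norm_eq hr _ hx]
  ring

lemma continuousOn_innerSeries (hu : ContinuousOn u (ball 0 1))
    (hC : ∀ x ∈ ball (0 : E) 1, |u x| ≤ C) (hq : |q| < 1) (hr0 : 0 ≤ r) (hr1 : r ≤ 1) :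
    ContinuousOn (innerSeries u q r) (ball 0 1) := by
  have hmaps (j : ℕ) : MapsTo (fun x : E => r ^ (2 * j) • x) (ball 0 1) (ball 0 1) :=
    fun _ hx => pow_smul_mem_ball hr0 hr1 _ hx
  exact continuousOn_tsum_geometric_mul (f := fun j x => u (r ^ (2 * j) • x)) hq
    (fun j => hu.comp (by fun_prop) (hmaps j)) fun j x hx => hC _ (hmaps j hx)

lemma continuousOn_outerSeries (hu : ContinuousOn u (ball 0 1))
    (hC : ∀ x ∈ ball (0 : E) 1, |u x| ≤ C) (hq : |q| < 1) (hr0 : 0 ≤ r) (hr1 : r ≤ 1) :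
    ContinuousOn (outerSeries u q r) (ball 0 1 \ closedBall 0 (r ^ 2)) := by
  set A : Set E := ball 0 1 \ closedBall 0 (r ^ 2)
  have hsq (x : E) (hx : x ∈ A) : r ^ 2 < ‖x‖ := by simpa using hx.2
  have hne (x : E) (hx : x ∈ A) : ‖x‖ ^ 2 ≠ 0 :=
    pow_ne_zero 2 ((sq_nonneg r).trans_lt (hsq x hx)).ne'
  have hmaps (j : ℕ) : MapsTo (fun x : E => r ^ (2 * j) • x) A (ball 0 1) :=
    fun _ hx => pow_smul_mem_ball hr0 hr1 _ hx.1
  have hmaps' (j : ℕ) :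
      MapsTo (fun x : E => r ^ (2 * j + 2) • ((‖x‖ ^ 2)⁻¹ • x)) A (ball 0 1) :=
    fun x hx => pow_add_two_smul_inv_norm_sq_smul_mem_ball hr0 hr1 _ (hsq x hx)
  refine continuousOn_tsum_geometric_mul (C := C + |q| * C)
    (f := fun j x => u (r ^ (2 * j) • x) - q * u (r ^ (2 * j + 2) • ((‖x‖ ^ 2)⁻¹ • x))) hq
    (fun j => (hu.comp (by fun_prop) (hmaps j)).sub
      (continuousOn_const.mul (hu.comp (by fun_prop (disch := exact hne)) (hmaps' j))))
    fun j x hx => ?_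
  calc |u (r ^ (2 * j) • x) - q * u (r ^ (2 * j + 2) • ((‖x‖ ^ 2)⁻¹ • x))|
      ≤ |u (r ^ (2 * j) • x)| + |q| * |u (r ^ (2 * j + 2) • ((‖x‖ ^ 2)⁻¹ • x))| := by
        rw [← abs_mul]; exact abs_sub _ _
    _ ≤ C + |q| * C := by
        gcongr
        exacts [hC _ (hmaps j hx), hC _ (hmaps' j hx)]

end

theorem stmt12_general (K : ℝ) (hK : 0 < K) (r : ℝ) (hr0 : 0 < r) (hr1 : r < 1)
    (u : EuclideanSpace ℝ (Fin 2) → ℝ)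
    (hbd : ∃ C, ∀ x ∈ ball (0 : EuclideanSpace ℝ (Fin 2)) 1, |u x| ≤ C)
    (hc : ContinuousOn u (closedBall 0 1))
    (η : EuclideanSpace ℝ (Fin 2)) (hη : ‖η‖ = r) :
    ∃ L : ℝ,
      Filter.Tendsto (fun t : ℝ => ∑' j : ℕ, ((1 - K) / (1 + K)) ^ j *
          (u ((r ^ (2 * j)) • (t • η)) -
            ((1 - K) / (1 + K)) *
              u ((r ^ (2 * j + 2)) • ((‖t • η‖ ^ 2)⁻¹ • (t • η)))))
        (nhdsWithin 1 (Set.Ioi 1)) (nhds L) ∧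
      Filter.Tendsto (fun t : ℝ => (2 * K / (1 + K)) *
          ∑' j : ℕ, ((1 - K) / (1 + K)) ^ j * u ((r ^ (2 * j)) • (t • η)))
        (nhdsWithin 1 (Set.Iio 1)) (nhds L) := by
  obtain ⟨C, hC⟩ := hbd
  have hu := hc.mono ball_subset_closedBall
  have hq := abs_one_sub_div_one_add_lt_one hK
  have hline : Tendsto (fun t : ℝ => t • η) (𝓝 1) (𝓝 η) := by
    simpa using (tendsto_id (x := 𝓝 (1 : ℝ))).smul_const η
  have hη_inner : ball (0 : EuclideanSpace ℝ (Fin 2)) 1 ∈ 𝓝 η :=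
    isOpen_ball.mem_nhds (by simpa [hη] using hr1)
  have hη_outer : ball 0 1 \ closedBall 0 (r ^ 2) ∈ 𝓝 η :=
    (isOpen_ball.sdiff isClosed_closedBall).mem_nhds
      (by simp [hη, hr1, pow_lt_self_of_lt_one₀ hr0 hr1])
  refine ⟨(2 * K / (1 + K)) * innerSeries u ((1 - K) / (1 + K)) r η, ?_, ?_⟩
  · rw [← one_sub_one_sub_div_one_add (by linarith), ← outerSeries_of_norm_eq hr0.ne' hη]
    exact (((continuousOn_outerSeries hu hC hq hr0.le hr1.le).continuousAt
      hη_outer).tendsto.comp hline).mono_left nhdsWithin_le_nhds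
  · exact ((((continuousOn_innerSeries hu hC hq hr0.le hr1.le).continuousAt
      hη_inner).tendsto.comp hline).const_mul _).mono_left nhdsWithin_le_nhds

theorem stmt12 (K : ℝ) (hK : 0 < K) (r : ℝ) (hr0 : 0 < r) (hr1 : r < 1)
    (u : EuclideanSpace ℝ (Fin 2) → ℝ)
    (hharm : IsHarmonicOn u (ball 0 1))
    (hbd : ∃ C, ∀ x ∈ ball (0 : EuclideanSpace ℝ (Fin 2)) 1, |u x| ≤ C)
    (hc : ContinuousOn u (closedBall 0 1))
    (η : EuclideanSpace ℝ (Fin 2)) (hη : ‖η‖ = r) :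
    ∃ L : ℝ,
      Filter.Tendsto (fun t : ℝ => ∑' j : ℕ, ((1 - K) / (1 + K)) ^ j *
          (u ((r ^ (2 * j)) • (t • η)) -
            ((1 - K) / (1 + K)) *
              u ((r ^ (2 * j + 2)) • ((‖t • η‖ ^ 2)⁻¹ • (t • η)))))
        (nhdsWithin 1 (Set.Ioi 1)) (nhds L) ∧
      Filter.Tendsto (fun t : ℝ => (2 * K / (1 + K)) *
          ∑' j : ℕ, ((1 - K) / (1 + K)) ^ j * u ((r ^ (2 * j)) • (t • η)))
        (nhdsWithin 1 (Set.Iio 1)) (nhds L) :=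
  stmt12_general K hK r hr0 hr1 u hbd hc η hη
end
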